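/- If a margin-based loss φ : ℝ → [0,∞) is convex, then for every n ≥ 1, Λ > 0 and W > 0, φ is not H_NN-calibrated with respect to the adversarial 0/1 loss ℓ_γ; moreover φ is not H_all-calibrated with respect to ℓ_γ. -/

import Mathlib

open scoped RealInnerProductSpace

noncomputable section

/-- A loss assigns a value to a predictor `f`, a point `x`, and a label `y` (±1). -/
abbrev Loss (d : ℕ) := ((EuclideanSpace ℝ (Fin d)) → ℝ) → (EuclideanSpace ℝ (Fin d)) → ℝ → ℝ

variable {d : ℕ}

/-- The inner (conditional) ℓ-risk. -/
def innerRisk (ℓ : Loss d) (f : EuclideanSpace ℝ (Fin d) → ℝ)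
    (x : EuclideanSpace ℝ (Fin d)) (η : ℝ) : ℝ :=
  η * ℓ f x 1 + (1 - η) * ℓ f x (-1)

/-- The minimal inner ℓ-risk over a hypothesis set `H`. -/
def minInnerRisk (ℓ : Loss d) (H : Set (EuclideanSpace ℝ (Fin d) → ℝ))
    (x : EuclideanSpace ℝ (Fin d)) (η : ℝ) : ℝ :=
  ⨅ f : H, innerRisk ℓ f x η

/-- ℓ₁ is H-calibrated with respect to ℓ₂. -/
def Calibrated (H : Set (EuclideanSpace ℝ (Fin d) → ℝ)) (ℓ₁ ℓ₂ : Loss d) : Prop :=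
  ∀ ε > (0:ℝ), ∀ η ∈ Set.Icc (0:ℝ) 1, ∀ x : EuclideanSpace ℝ (Fin d), ‖x‖ ≤ 1 →
    ∃ δ > (0:ℝ), ∀ f ∈ H,
      innerRisk ℓ₁ f x η < minInnerRisk ℓ₁ H x η + δ →
      innerRisk ℓ₂ f x η < minInnerRisk ℓ₂ H x η + ε

/-- The adversarial 0/1 loss with perturbation radius γ. -/
def advLoss (γ : ℝ) : Loss d := fun f x y =>
  ⨆ x' : Metric.closedBall x γ, (if y * f ↑x' ≤ 0 then (1:ℝ) else 0)

/-- A margin-based loss viewed as a loss. -/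
def marginLoss (φ : ℝ → ℝ) : Loss d := fun f x y => φ (y * f x)

/-- The supremum-based surrogate of a margin-based loss. -/
def supLoss (γ : ℝ) (φ : ℝ → ℝ) : Loss d := fun f x y =>
  ⨆ x' : Metric.closedBall x γ, φ (y * f ↑x')

/-- Infimum of f over the closed γ-ball around x. -/
def infBall (γ : ℝ) (f : EuclideanSpace ℝ (Fin d) → ℝ) (x : EuclideanSpace ℝ (Fin d)) : ℝ :=
  ⨅ x' : Metric.closedBall x γ, f ↑x'

/-- Supremum of f over the closed γ-ball around x. -/
def supBall (γ : ℝ) (f : EuclideanSpace ℝ (Fin d) → ℝ) (x : EuclideanSpace ℝ (Fin d)) : ℝ :=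
  ⨆ x' : Metric.closedBall x γ, f ↑x'

/-- x is a distinguishing point for H. -/
def Distinguishing (γ : ℝ) (H : Set (EuclideanSpace ℝ (Fin d) → ℝ))
    (x : EuclideanSpace ℝ (Fin d)) : Prop :=
  ‖x‖ ≤ 1 ∧ (∃ f ∈ H, 0 < infBall γ f x) ∧ (∃ g ∈ H, supBall γ g x < 0)

/-- H is regular for adversarial calibration. -/
def RegularAdv (γ : ℝ) (H : Set (EuclideanSpace ℝ (Fin d) → ℝ)) : Prop :=
  ∃ x, Distinguishing γ H x

/-- H is symmetric. -/
def SymmetricH (H : Set (EuclideanSpace ℝ (Fin d) → ℝ)) : Prop :=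
  ∀ f ∈ H, -f ∈ H

/-- Linear hypothesis set. -/
def Hlin (d : ℕ) : Set (EuclideanSpace ℝ (Fin d) → ℝ) :=
  { f | ∃ w : EuclideanSpace ℝ (Fin d), ‖w‖ = 1 ∧ f = fun x => (inner ℝ w x : ℝ) }

/-- Generalized linear hypothesis set. -/
def Hg (d : ℕ) (g : ℝ → ℝ) (G : ℝ) : Set (EuclideanSpace ℝ (Fin d) → ℝ) :=
  { f | ∃ (w : EuclideanSpace ℝ (Fin d)) (b : ℝ), ‖w‖ = 1 ∧ |b| ≤ G ∧
      f = fun x => g (inner ℝ w x : ℝ) + b }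

/-- ReLU-based hypothesis set. -/
def Hrelu (d : ℕ) (G : ℝ) : Set (EuclideanSpace ℝ (Fin d) → ℝ) :=
  Hg d (fun t => max t 0) G

/-- One-layer ReLU neural network hypothesis set. -/
def Hnn (d n : ℕ) (Λ W : ℝ) : Set (EuclideanSpace ℝ (Fin d) → ℝ) :=
  { f | ∃ (u : Fin n → ℝ) (w : Fin n → EuclideanSpace ℝ (Fin d)),
      (∑ j, |u j|) ≤ Λ ∧ (∀ j, ‖w j‖ ≤ W) ∧
      f = fun x => ∑ j, u j * max (inner ℝ (w j) x : ℝ) 0 }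

/-- All (Borel) measurable functions. -/
def Hall (d : ℕ) : Set (EuclideanSpace ℝ (Fin d) → ℝ) :=
  { f | Measurable f }

/-- The ρ-margin loss. -/
def phiRho (ρ t : ℝ) : ℝ := min 1 (max 0 (1 - t / ρ))

/-! At `η = 1/2` convexity gives `φ 0 ≤ (φ t + φ (-t)) / 2`, so the zero predictor minimizes
the inner surrogate risk exactly. But `y * 0 ≤ 0` for both labels, so its adversarial risk is `1`,
while a hypothesis that is positive on the whole `γ`-ball around `x` has adversarial risk `1/2`.
For `H_NN` such a hypothesis is a single ReLU neuron pointing at a unit vector `x`, for `H_all`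
a positive constant. -/

open Metric

lemma real_inner_pos_of_mem_closedBall {E : Type*} [NormedAddCommGroup E]
    [InnerProductSpace ℝ E] {e x : E} {r : ℝ} (hr : r < ‖e‖) (hx : x ∈ closedBall e r) :
    0 < ⟪e, x⟫ := by
  have hxe : ‖x - e‖ ≤ r := by rwa [← dist_eq_norm]
  have he : 0 < ‖e‖ := ((norm_nonneg _).trans hxe).trans_lt hr
  calc 0 < ‖e‖ * (‖e‖ - r) := mul_pos he (sub_pos.2 hr)
    _ ≤ ‖e‖ * (‖e‖ - ‖x - e‖) := by gcongr
    _ ≤ ⟪e, e⟫ + ⟪e, x - e⟫ := by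
      rw [real_inner_self_eq_norm_mul_norm]
      linarith [neg_abs_le ⟪e, x - e⟫, abs_real_inner_le_norm e (x - e)]
    _ = ⟪e, x⟫ := by rw [← inner_add_right, add_sub_cancel]

lemma ConvexOn.map_zero_le_innerRisk_marginLoss_half {φ : ℝ → ℝ}
    (hφ : ConvexOn ℝ Set.univ φ) (f : EuclideanSpace ℝ (Fin d) → ℝ)
    (x : EuclideanSpace ℝ (Fin d)) :
    φ 0 ≤ innerRisk (marginLoss φ) f x (1 / 2) := by
  have h := hφ.2 (Set.mem_univ (f x)) (Set.mem_univ (-f x)) (by norm_num : (0 : ℝ) ≤ 1 / 2)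
    (by norm_num : (0 : ℝ) ≤ 1 / 2) (by norm_num)
  simp only [smul_eq_mul, show (1 / 2 : ℝ) * f x + 1 / 2 * -f x = 0 by ring] at h
  simp only [innerRisk, marginLoss, one_mul, neg_one_mul]
  linarith

lemma ConvexOn.map_zero_le_minInnerRisk_marginLoss_half {φ : ℝ → ℝ}
    (hφ : ConvexOn ℝ Set.univ φ) {H : Set (EuclideanSpace ℝ (Fin d) → ℝ)}
    (hH : H.Nonempty) (x : EuclideanSpace ℝ (Fin d)) :
    φ 0 ≤ minInnerRisk (marginLoss φ) H x (1 / 2) :=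
  have := hH.to_subtype
  le_ciInf fun f => hφ.map_zero_le_innerRisk_marginLoss_half f x

lemma innerRisk_marginLoss_zero_half (φ : ℝ → ℝ) (x : EuclideanSpace ℝ (Fin d)) :
    innerRisk (marginLoss φ) 0 x (1 / 2) = φ 0 := by
  simp only [innerRisk, marginLoss, Pi.zero_apply, mul_zero]
  ring

lemma advLoss_eq_one {γ : ℝ} (hγ : 0 ≤ γ) {f : EuclideanSpace ℝ (Fin d) → ℝ}
    {x : EuclideanSpace ℝ (Fin d)} {y : ℝ} (h : ∀ x' ∈ closedBall x γ, y * f x' ≤ 0) :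
    advLoss γ f x y = 1 := by
  have := (nonempty_closedBall (x := x).2 hγ).to_subtype
  calc advLoss γ f x y = ⨆ _ : closedBall x γ, (1 : ℝ) :=
        iSup_congr fun x' => if_pos (h x' x'.2)
    _ = 1 := ciSup_const

lemma advLoss_eq_zero {γ : ℝ} {f : EuclideanSpace ℝ (Fin d) → ℝ}
    {x : EuclideanSpace ℝ (Fin d)} {y : ℝ} (h : ∀ x' ∈ closedBall x γ, 0 < y * f x') :
    advLoss γ f x y = 0 :=
  (iSup_congr fun x' : closedBall x γ => if_neg (h x' x'.2).not_ge).trans Real.iSup_const_zero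

lemma advLoss_nonneg (γ : ℝ) (f : EuclideanSpace ℝ (Fin d) → ℝ)
    (x : EuclideanSpace ℝ (Fin d)) (y : ℝ) : 0 ≤ advLoss γ f x y :=
  Real.iSup_nonneg fun _ => by positivity

lemma minInnerRisk_advLoss_le (γ : ℝ) {η : ℝ} (hη : η ∈ Set.Icc (0 : ℝ) 1)
    {H : Set (EuclideanSpace ℝ (Fin d) → ℝ)} {f : EuclideanSpace ℝ (Fin d) → ℝ}
    (hf : f ∈ H) (x : EuclideanSpace ℝ (Fin d)) :
    minInnerRisk (advLoss γ) H x η ≤ innerRisk (advLoss γ) f x η := by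
  refine ciInf_le ⟨0, ?_⟩ (⟨f, hf⟩ : H)
  rintro _ ⟨g, rfl⟩
  have := advLoss_nonneg γ g x 1
  have := advLoss_nonneg γ g x (-1)
  simp only [innerRisk]
  nlinarith [hη.1, hη.2]

theorem not_calibrated_advLoss_of_convexOn {γ : ℝ} (hγ : 0 ≤ γ) {φ : ℝ → ℝ}
    (hφ : ConvexOn ℝ Set.univ φ) {H : Set (EuclideanSpace ℝ (Fin d) → ℝ)} (h0 : 0 ∈ H)
    {x : EuclideanSpace ℝ (Fin d)} (hx : ‖x‖ ≤ 1) {f : EuclideanSpace ℝ (Fin d) → ℝ}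
    (hf : f ∈ H) (hpos : ∀ x' ∈ closedBall x γ, 0 < f x') :
    ¬ Calibrated H (marginLoss φ) (advLoss γ) := by
  intro hcal
  have hhalf : (1 / 2 : ℝ) ∈ Set.Icc (0 : ℝ) 1 := by norm_num
  obtain ⟨δ, hδ, hcal⟩ := hcal (1 / 2) one_half_pos (1 / 2) hhalf x hx
  have hzero_margin : innerRisk (marginLoss φ) 0 x (1 / 2)
      < minInnerRisk (marginLoss φ) H x (1 / 2) + δ := by
    rw [innerRisk_marginLoss_zero_half]
    linarith [hφ.map_zero_le_minInnerRisk_marginLoss_half ⟨0, h0⟩ x]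
  have hzero_adv : innerRisk (advLoss γ) 0 x (1 / 2) = 1 := by
    rw [innerRisk, advLoss_eq_one hγ (by simp), advLoss_eq_one hγ (by simp)]
    ring
  have hf_adv : innerRisk (advLoss γ) f x (1 / 2) = 1 / 2 := by
    rw [innerRisk, advLoss_eq_zero (by simpa using hpos),
      advLoss_eq_one hγ fun x' hx' => by linarith [hpos x' hx']]
    ring
  linarith [hcal 0 h0 hzero_margin, minInnerRisk_advLoss_le γ hhalf hf x]

lemma neuron_mem_Hnn {n : ℕ} (hn : 0 < n) {Λ W u : ℝ} (hu : |u| ≤ Λ)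
    {w : EuclideanSpace ℝ (Fin d)} (hw : ‖w‖ ≤ W) :
    (fun x => u * max ⟪w, x⟫ 0) ∈ Hnn d n Λ W := by
  refine ⟨Pi.single ⟨0, hn⟩ u, fun _ => w, ?_, fun _ => hw, ?_⟩
  · simpa [Pi.apply_single (fun _ => abs) (fun _ => abs_zero)] using hu
  · funext x
    simp [Pi.single_apply]

lemma zero_mem_Hnn {n : ℕ} (hn : 0 < n) {Λ W : ℝ} (hΛ : 0 ≤ Λ) (hW : 0 ≤ W) :
    (0 : EuclideanSpace ℝ (Fin d) → ℝ) ∈ Hnn d n Λ W := by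
  simpa [Pi.zero_def] using
    neuron_mem_Hnn (w := 0) hn (abs_zero.trans_le hΛ) (norm_zero.trans_le hW)

theorem stmt4_general (d : ℕ) (hd : 1 ≤ d) (γ : ℝ) (hγ0 : 0 < γ) (hγ1 : γ < 1)
    (φ : ℝ → ℝ) (hconv : ConvexOn ℝ Set.univ φ) :
    (∀ n : ℕ, 1 ≤ n → ∀ Λ W : ℝ, 0 < Λ → 0 < W →
      ¬ Calibrated (Hnn d n Λ W) (marginLoss φ) (advLoss γ)) ∧
    ¬ Calibrated (Hall d) (marginLoss φ) (advLoss γ) := by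
  refine ⟨fun n hn Λ W hΛ hW => ?_, ?_⟩
  · set e : EuclideanSpace ℝ (Fin d) := EuclideanSpace.single ⟨0, hd⟩ 1
    have he : ‖e‖ = 1 := by simp [e]
    have hneuron : (fun x => Λ * max ⟪W • e, x⟫ 0) ∈ Hnn d n Λ W :=
      neuron_mem_Hnn hn (abs_of_pos hΛ).le
        (by rw [norm_smul, he, Real.norm_of_nonneg hW.le, mul_one])
    refine not_calibrated_advLoss_of_convexOn hγ0.le hconv (zero_mem_Hnn hn hΛ.le hW.le) he.le
      hneuron fun x' hx' => mul_pos hΛ (lt_max_of_lt_left ?_)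
    rw [real_inner_smul_left]
    exact mul_pos hW (real_inner_pos_of_mem_closedBall (he ▸ hγ1) hx')
  · exact not_calibrated_advLoss_of_convexOn hγ0.le hconv measurable_zero
      (norm_zero.trans_le zero_le_one) (f := 1) measurable_one fun _ _ => one_pos

theorem stmt4 (d : ℕ) (hd : 1 ≤ d) (γ : ℝ) (hγ0 : 0 < γ) (hγ1 : γ < 1)
    (φ : ℝ → ℝ) (hφ0 : ∀ t, 0 ≤ φ t) (hconv : ConvexOn ℝ Set.univ φ) :
    (∀ n : ℕ, 1 ≤ n → ∀ Λ W : ℝ, 0 < Λ → 0 < W →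
      ¬ Calibrated (Hnn d n Λ W) (marginLoss φ) (advLoss γ)) ∧
    ¬ Calibrated (Hall d) (marginLoss φ) (advLoss γ) :=
  stmt4_general d hd γ hγ0 hγ1 φ hconv
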